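/- arXiv:1702.01185 — 4 statements merged into one kernel-verified Lean document; each statement's English description precedes it below -/
import Mathlib

section
/- For every real ρ with 0 ≤ ρ < 3/(4+√6) there exist constants c₁, c₂, c₃, c₄ > 0, depending only on ρ, such that the following holds. Let N, n, s ≥ 1 be integers, let D be a real N×n matrix whose restricted isometry constant of order 2s satisfies ρ_{2s}(D) ≤ ρ, let c̃ ∈ ℝⁿ, y ∈ ℝᴺ and η ≥ 0 satisfy ‖Dc̃ − y‖₂ ≤ η, and let ĉ be any Basis Pursuit Denoising solution at level η. Then ‖c̃ − ĉ‖₂ ≤ (c₁/√s)·σ_s(c̃)₁ + c₂·η and ‖c̃ − ĉ‖₁ ≤ c₃·σ_s(c̃)₁ + c₄·η·√s. -/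
/-- The ℓ¹-norm of a finitely supported real vector. -/
noncomputable def l1norm {ι : Type*} [Fintype ι] (x : ι → ℝ) : ℝ := ∑ i, |x i|

/-- The ℓ²-norm of a finitely supported real vector. -/
noncomputable def l2norm {ι : Type*} [Fintype ι] (x : ι → ℝ) : ℝ := Real.sqrt (∑ i, (x i) ^ 2)

/-- `x` has at most `s` nonzero entries. -/
def Sparse {ι : Type*} (s : ℕ) (x : ι → ℝ) : Prop :=
  ∃ T : Finset ι, T.card ≤ s ∧ ∀ i ∉ T, x i = 0

/-- The best `s`-term approximation error `σ_s(c)₁ = min{‖c − z‖₁ : z is s-sparse}`. -/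
noncomputable def bestSTermError {ι : Type*} [Fintype ι] (s : ℕ) (c : ι → ℝ) : ℝ :=
  sInf ((fun z => l1norm (c - z)) '' {z | Sparse s z})

/-- `chat` is a Basis Pursuit Denoising solution at noise level `η`. -/
def IsBPDNSolution {ι κ : Type*} [Fintype ι] [Fintype κ]
    (D : Matrix ι κ ℝ) (y : ι → ℝ) (η : ℝ) (chat : κ → ℝ) : Prop :=
  l2norm (D.mulVec chat - y) ≤ η ∧
    ∀ c : κ → ℝ, l2norm (D.mulVec c - y) ≤ η → l1norm chat ≤ l1norm c

/-!
Write `h = c̃ - ĉ` and let `S` carry the `s` largest entries of `h`. Minimality of `‖ĉ‖₁` gives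
the cone condition `‖h_{Sᶜ}‖₁ ≤ ‖h_S‖₁ + 2σ_s(c̃)₁`, and feasibility of `c̃` and `ĉ` gives
`‖Dh‖₂ ≤ 2η`. The cone condition bounds the tail `h_{Sᶜ}` in `ℓ^∞` by `α` and in `ℓ¹` by `sα`,
with `√s α = ‖h_S‖₂ + 2σ_s(c̃)₁/√s`. By the sparse representation of polytopes (Cai–Zhang) such a
vector is a convex combination of `s`-sparse vectors `u` with `‖u‖_∞ ≤ α`, supported off `S`, and
polarising the restricted isometry property on `h_S ± u` bounds `-⟨Dh_S, Dh_{Sᶜ}⟩` by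
`ρ/2 (‖h_S‖₂² + sα²)`. This yields a quadratic inequality for `‖h_S‖₂` that can be solved as soon as
`ρ < 1/2`; both error bounds then follow from the cone condition.
-/

open Finset Matrix

section Norms
variable {ι : Type*} [Fintype ι]

lemma l2norm_eq_norm (x : ι → ℝ) :
    l2norm x = ‖(WithLp.toLp 2 x : EuclideanSpace ℝ ι)‖ := by
  simp [l2norm, EuclideanSpace.norm_eq]

lemma l2norm_nonneg (x : ι → ℝ) : 0 ≤ l2norm x := Real.sqrt_nonneg _

lemma l2norm_sq (x : ι → ℝ) : l2norm x ^ 2 = ∑ i, x i ^ 2 := Real.sq_sqrt (by positivity)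

lemma l2norm_sq_eq_dotProduct (x : ι → ℝ) : l2norm x ^ 2 = x ⬝ᵥ x := by
  rw [l2norm_sq]; simp only [dotProduct, sq]

lemma l2norm_add_le (x z : ι → ℝ) : l2norm (x + z) ≤ l2norm x + l2norm z := by
  simpa only [l2norm_eq_norm, WithLp.toLp_add] using norm_add_le _ _

lemma l2norm_sub_le (x z : ι → ℝ) : l2norm (x - z) ≤ l2norm x + l2norm z := by
  simpa only [l2norm_eq_norm, WithLp.toLp_sub] using norm_sub_le _ _

lemma dotProduct_le_l2norm_mul (x z : ι → ℝ) : x ⬝ᵥ z ≤ l2norm x * l2norm z := by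
  have := real_inner_le_norm (WithLp.toLp 2 x : EuclideanSpace ℝ ι) (WithLp.toLp 2 z)
  rwa [EuclideanSpace.inner_toLp_toLp, star_trivial, dotProduct_comm, ← l2norm_eq_norm,
    ← l2norm_eq_norm] at this

lemma l1norm_nonneg (x : ι → ℝ) : 0 ≤ l1norm x := sum_nonneg fun _ _ => abs_nonneg _

lemma l1norm_indicator (S : Finset ι) (x : ι → ℝ) :
    l1norm ((S : Set ι).indicator x) = ∑ i ∈ S, |x i| := by
  rw [l1norm, ← sum_indicator_subset _ (subset_univ S)]
  refine sum_congr rfl fun i _ => ?_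
  by_cases hi : i ∈ S <;> simp [hi]

lemma l2norm_indicator_sq (S : Finset ι) (x : ι → ℝ) :
    l2norm ((S : Set ι).indicator x) ^ 2 = ∑ i ∈ S, x i ^ 2 := by
  rw [l2norm_sq, ← sum_indicator_subset _ (subset_univ S)]
  refine sum_congr rfl fun i _ => ?_
  by_cases hi : i ∈ S <;> simp [hi]

lemma l2norm_sq_le_mul_l1norm {x : ι → ℝ} {a : ℝ} (hx : ∀ i, |x i| ≤ a) :
    l2norm x ^ 2 ≤ a * l1norm x := by
  rw [l2norm_sq, l1norm, mul_sum]
  exact sum_le_sum fun i _ => by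
    rw [← sq_abs, sq]; exact mul_le_mul_of_nonneg_right (hx i) (abs_nonneg _)

lemma sum_abs_le_sqrt_mul_l2norm_indicator {S : Finset ι} {s : ℕ} (hS : #S ≤ s)
    (x : ι → ℝ) :
    ∑ i ∈ S, |x i| ≤ √s * l2norm ((S : Set ι).indicator x) := by
  have hcs := sq_sum_le_card_mul_sum_sq (s := S) (f := fun i => |x i|)
  simp only [sq_abs] at hcs
  rw [← Real.sqrt_sq (sum_nonneg fun i _ => abs_nonneg (x i)), ← Real.sqrt_sq (l2norm_nonneg _),
    ← Real.sqrt_mul (Nat.cast_nonneg _), l2norm_indicator_sq]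
  exact Real.sqrt_le_sqrt (hcs.trans (by gcongr))

end Norms

lemma mem_segment_add_smul_add_smul_neg {E : Type*} [AddCommGroup E] [Module ℝ E] {a b : ℝ}
    (ha : 0 ≤ a) (hb : 0 ≤ b) (v d : E) : v ∈ segment ℝ (v + a • d) (v + b • -d) := by
  rcases (add_nonneg ha hb).eq_or_lt with hab | hab
  · obtain ⟨rfl, rfl⟩ : a = 0 ∧ b = 0 := by constructor <;> linarith
    simp
  refine ⟨b / (a + b), a / (a + b), by positivity, by positivity, by field_simp; ring, ?_⟩
  match_scalars <;> field_simp <;> ring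

lemma le_div_add_sqrt_of_mul_sq_le {k p q t : ℝ} (hk : 0 < k) (hp : 0 ≤ p) (hq : 0 ≤ q)
    (h : k * t ^ 2 ≤ p * t + q) : t ≤ p / k + √(q / k) := by
  set b := p / k
  set u := √(q / k)
  have hb : k * b = p := mul_div_cancel₀ p hk.ne'
  have hu : k * u ^ 2 = q := by rw [Real.sq_sqrt (by positivity)]; exact mul_div_cancel₀ q hk.ne'
  have hb0 : 0 ≤ b := div_nonneg hp hk.le
  have hu0 : 0 ≤ u := Real.sqrt_nonneg _
  by_contra! hlt
  have hquad : b * t + u ^ 2 < t ^ 2 := by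
    nlinarith [mul_pos (sub_pos.2 hlt) (by linarith : 0 < t + u), mul_nonneg hb0 hu0]
  nlinarith [mul_lt_mul_of_pos_left hquad hk]

lemma abs_add_mul_sign {x c : ℝ} (hx : x ≠ 0) (hc : -|x| ≤ c) :
    |x + c * Real.sign x| = |x| + c := by
  rcases hx.lt_or_gt with h | h
  · rw [Real.sign_of_neg h, abs_of_neg h] at *
    rw [abs_of_nonpos (by linarith)]
    ring
  · rw [Real.sign_of_pos h, abs_of_pos h] at *
    rw [abs_of_nonneg (by linarith)]
    ring

section Sparse
variable {ι : Type*} {s t : ℕ} {x z : ι → ℝ}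

lemma Sparse.mono (hx : Sparse s x) (hst : s ≤ t) : Sparse t x :=
  let ⟨S, hS, hxS⟩ := hx
  ⟨S, hS.trans hst, hxS⟩

lemma Sparse.add [DecidableEq ι] (hx : Sparse s x) (hz : Sparse t z) :
    Sparse (s + t) (x + z) := by
  obtain ⟨S, hS, hxS⟩ := hx
  obtain ⟨T, hT, hzT⟩ := hz
  refine ⟨S ∪ T, (card_union_le S T).trans (add_le_add hS hT), fun i hi => ?_⟩
  rw [mem_union, not_or] at hi
  simp [hxS i hi.1, hzT i hi.2]

lemma Sparse.sub [DecidableEq ι] (hx : Sparse s x) (hz : Sparse t z) :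
    Sparse (s + t) (x - z) := by
  rw [sub_eq_add_neg]
  exact hx.add (by simpa [Sparse] using hz)

lemma Sparse.l2norm_sq_le [Fintype ι] {a : ℝ} (hx : Sparse s x) (ha : ∀ i, |x i| ≤ a) :
    l2norm x ^ 2 ≤ s * a ^ 2 := by
  obtain ⟨S, hS, hxS⟩ := hx
  calc l2norm x ^ 2 = ∑ i ∈ S, x i ^ 2 := by
        rw [l2norm_sq, sum_subset (subset_univ S) fun i _ hi => by simp [hxS i hi]]
    _ ≤ ∑ _i ∈ S, a ^ 2 := sum_le_sum fun i _ => by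
        rw [← sq_abs]; exact pow_le_pow_left₀ (abs_nonneg _) (ha i) 2
    _ ≤ s * a ^ 2 := by rw [sum_const, nsmul_eq_mul]; gcongr

end Sparse

section BestTerms
variable {ι : Type*} {s : ℕ} {c : ι → ℝ} {S : Finset ι}

lemma bestSTermError_nonneg [Fintype ι] (s : ℕ) (c : ι → ℝ) : 0 ≤ bestSTermError s c :=
  le_csInf ⟨_, 0, ⟨∅, by simp⟩, rfl⟩ fun _ ⟨_, _, hz⟩ => hz ▸ l1norm_nonneg _

def IsLargestAbsSet (s : ℕ) (c : ι → ℝ) (S : Finset ι) : Prop :=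
  #S ≤ s ∧ ∀ F : Finset ι, #F ≤ s → ∑ i ∈ F, |c i| ≤ ∑ i ∈ S, |c i|

lemma exists_isLargestAbsSet [Fintype ι] (s : ℕ) (c : ι → ℝ) :
    ∃ S, IsLargestAbsSet s c S := by
  obtain ⟨S, hS, hmax⟩ := (univ.powerset.filter fun F : Finset ι => #F ≤ s).exists_max_image
    (fun F => ∑ i ∈ F, |c i|) ⟨∅, by simp⟩
  exact ⟨S, (mem_filter.1 hS).2, fun F hF => hmax F (by simp [hF])⟩

namespace IsLargestAbsSet

lemma mul_abs_le_sum [DecidableEq ι] (hS : IsLargestAbsSet s c S) {k : ι} (hk : k ∉ S) :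
    s * |c k| ≤ ∑ i ∈ S, |c i| := by
  rcases hS.1.lt_or_eq with hlt | heq
  · have hins := hS.2 (insert k S) (by rw [card_insert_of_notMem hk]; omega)
    rw [sum_insert hk] at hins
    have hck : |c k| = 0 := le_antisymm (by linarith) (abs_nonneg _)
    rw [hck, mul_zero]
    exact sum_nonneg fun i _ => abs_nonneg _
  · rw [← heq, ← nsmul_eq_mul]
    refine card_nsmul_le_sum S _ _ fun j hj => ?_
    have hkj : k ∉ S.erase j := fun h => hk (mem_of_mem_erase h)
    have hS₀ := card_pos.2 ⟨j, hj⟩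
    have hswap := hS.2 (insert k (S.erase j))
      (by rw [card_insert_of_notMem hkj, card_erase_of_mem hj]; omega)
    rw [sum_insert hkj, ← add_sum_erase S _ hj] at hswap
    linarith

variable [Fintype ι] [DecidableEq ι]

lemma sum_compl_le (hS : IsLargestAbsSet s c S) {F : Finset ι} (hF : #F ≤ s) :
    ∑ i ∈ Sᶜ, |c i| ≤ ∑ i ∈ Fᶜ, |c i| := by
  have := hS.2 F hF
  have := sum_add_sum_compl S fun i => |c i|
  have := sum_add_sum_compl F fun i => |c i|
  linarith

lemma sum_compl_le_bestSTermError (hS : IsLargestAbsSet s c S) :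
    ∑ i ∈ Sᶜ, |c i| ≤ bestSTermError s c := by
  refine le_csInf ⟨_, 0, ⟨∅, by simp⟩, rfl⟩ ?_
  rintro _ ⟨z, ⟨Z, hZ, hz⟩, rfl⟩
  calc ∑ i ∈ Sᶜ, |c i| ≤ ∑ i ∈ Zᶜ, |c i| := hS.sum_compl_le hZ
    _ = ∑ i ∈ Zᶜ, |(c - z) i| := sum_congr rfl fun i hi => by simp [hz i (by simpa using hi)]
    _ ≤ l1norm (c - z) :=
      sum_le_sum_of_subset_of_nonneg (subset_univ _) fun _ _ _ => abs_nonneg _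

end IsLargestAbsSet

lemma sum_compl_abs_sub_le [Fintype ι] [DecidableEq ι] (T : Finset ι) {a b : ι → ℝ}
    (hab : l1norm b ≤ l1norm a) :
    ∑ i ∈ Tᶜ, |(a - b) i| ≤ ∑ i ∈ T, |(a - b) i| + 2 * ∑ i ∈ Tᶜ, |a i| := by
  have hT : ∑ i ∈ T, (|a i| - |(a - b) i|) ≤ ∑ i ∈ T, |b i| :=
    sum_le_sum fun i _ => by simpa using abs_sub_abs_le_abs_sub (a i) (a i - b i)
  have hTc : ∑ i ∈ Tᶜ, (|(a - b) i| - |a i|) ≤ ∑ i ∈ Tᶜ, |b i| :=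
    sum_le_sum fun i _ => by simpa using abs_sub_abs_le_abs_sub (a i - b i) (a i)
  rw [sum_sub_distrib] at hT hTc
  have ha := sum_add_sum_compl T fun i => |a i|
  have hb := sum_add_sum_compl T fun i => |b i|
  rw [l1norm, l1norm, ← ha, ← hb] at hab
  linarith

end BestTerms

section BPDN
variable {ι κ : Type*} [Fintype ι] [Fintype κ] {D : Matrix κ ι ℝ} {y : κ → ℝ}
  {η : ℝ} {c ĉ : ι → ℝ}

lemma IsBPDNSolution.l2norm_mulVec_sub_le (hĉ : IsBPDNSolution D y η ĉ)
    (hc : l2norm (D *ᵥ c - y) ≤ η) : l2norm (D *ᵥ (c - ĉ)) ≤ 2 * η := by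
  have hsplit : D *ᵥ (c - ĉ) = (D *ᵥ c - y) - (D *ᵥ ĉ - y) := by rw [mulVec_sub]; abel
  rw [hsplit]
  linarith [l2norm_sub_le (D *ᵥ c - y) (D *ᵥ ĉ - y), hĉ.1]

lemma IsBPDNSolution.sum_compl_abs_sub_le [DecidableEq ι] {s : ℕ} {S : Finset ι}
    (hĉ : IsBPDNSolution D y η ĉ) (hc : l2norm (D *ᵥ c - y) ≤ η)
    (hS : IsLargestAbsSet s (c - ĉ) S) :
    ∑ i ∈ Sᶜ, |(c - ĉ) i| ≤ ∑ i ∈ S, |(c - ĉ) i| + 2 * bestSTermError s c := by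
  obtain ⟨T, hT⟩ := exists_isLargestAbsSet s c
  calc ∑ i ∈ Sᶜ, |(c - ĉ) i| ≤ ∑ i ∈ Tᶜ, |(c - ĉ) i| := hS.sum_compl_le hT.1
    _ ≤ ∑ i ∈ T, |(c - ĉ) i| + 2 * ∑ i ∈ Tᶜ, |c i| :=
        _root_.sum_compl_abs_sub_le T (hĉ.2 c hc)
    _ ≤ ∑ i ∈ S, |(c - ĉ) i| + 2 * bestSTermError s c := by
        gcongr ?_ + 2 * ?_
        exacts [hS.2 T hT.1, hT.sum_compl_le_bestSTermError]

end BPDN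

section RIP
variable {ι κ : Type*} [Fintype ι] [Fintype κ]

/-- `HasRIP D k ρ` says `ρ_k(D) ≤ ρ`. -/
def HasRIP (D : Matrix κ ι ℝ) (k : ℕ) (ρ : ℝ) : Prop :=
  ∀ c : ι → ℝ, Sparse k c →
    (1 - ρ) * l2norm c ^ 2 ≤ l2norm (D *ᵥ c) ^ 2 ∧
      l2norm (D *ᵥ c) ^ 2 ≤ (1 + ρ) * l2norm c ^ 2

variable {D : Matrix κ ι ℝ} {ρ : ℝ}

lemma HasRIP.l2norm_mulVec_le {k : ℕ} (hD : HasRIP D k ρ) {c : ι → ℝ} (hc : Sparse k c) :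
    l2norm (D *ᵥ c) ≤ √(1 + ρ) * l2norm c :=
  calc l2norm (D *ᵥ c) = √(l2norm (D *ᵥ c) ^ 2) := (Real.sqrt_sq (l2norm_nonneg _)).symm
    _ ≤ √((1 + ρ) * l2norm c ^ 2) := Real.sqrt_le_sqrt (hD c hc).2
    _ = √(1 + ρ) * l2norm c := by
        rw [Real.sqrt_mul' _ (sq_nonneg _), Real.sqrt_sq (l2norm_nonneg _)]

lemma HasRIP.neg_dotProduct_mulVec_le [DecidableEq ι] {s t : ℕ} (hD : HasRIP D (s + t) ρ)
    {x z : ι → ℝ} (hx : Sparse s x) (hz : Sparse t z) (hxz : ∀ i, x i * z i = 0) :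
    -(D *ᵥ x ⬝ᵥ D *ᵥ z) ≤ ρ / 2 * (l2norm x ^ 2 + l2norm z ^ 2) := by
  have hxz' : x ⬝ᵥ z = 0 := sum_eq_zero fun i _ => hxz i
  have hadd := (hD _ (hx.add hz)).1
  have hsub := (hD _ (hx.sub hz)).2
  simp only [l2norm_sq_eq_dotProduct, mulVec_add, mulVec_sub, add_dotProduct, dotProduct_add,
    sub_dotProduct, dotProduct_sub, dotProduct_comm z x, dotProduct_comm (D *ᵥ z) (D *ᵥ x),
    hxz'] at hadd hsub ⊢
  linarith

end RIP

section SparsePolytope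
variable {ι : Type*} [Fintype ι] {α : ℝ} {s : ℕ} {v : ι → ℝ} {i j : ι}

noncomputable def fractionalEntries (α : ℝ) (v : ι → ℝ) : Finset ι :=
  {k | 0 < |v k| ∧ |v k| < α}

lemma min_pos_of_mem_fractionalEntries (hi : i ∈ fractionalEntries α v)
    (hj : j ∈ fractionalEntries α v) : 0 < min |v i| (α - |v j|) := by
  simp only [fractionalEntries, mem_filter, mem_univ, true_and] at hi hj
  exact lt_min hi.1 (by linarith)

variable [DecidableEq ι]

lemma one_lt_card_fractionalEntries (hle : ∀ k, |v k| ≤ α) (hl1 : l1norm v ≤ s * α)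
    (hv : ¬ Sparse s v) : 1 < #(fractionalEntries α v) := by
  set P : Finset ι := {k | 0 < |v k|}
  set F := fractionalEntries α v
  have hFP : F ⊆ P := fun k hk => mem_filter.2 ⟨mem_univ k, (mem_filter.1 hk).2.1⟩
  have hP : s < #P := by
    by_contra! hP
    exact hv ⟨P, hP, fun k hk => by simpa [P] using hk⟩
  have hfull : ∀ k ∈ P \ F, |v k| = α := fun k hk => by
    simp only [mem_sdiff, mem_filter, mem_univ, true_and, F, P, fractionalEntries, not_and,
      not_lt] at hk
    exact le_antisymm (hle k) (hk.2 hk.1)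
  have hsum : #(P \ F) * α + ∑ k ∈ F, |v k| ≤ s * α := by
    rw [← nsmul_eq_mul, ← sum_const, ← sum_congr rfl hfull, sum_sdiff hFP]
    exact (sum_le_sum_of_subset_of_nonneg (subset_univ P) fun _ _ _ => abs_nonneg _).trans hl1
  obtain ⟨k, hk⟩ : P.Nonempty := card_pos.1 (by omega)
  have hα : 0 < α := ((mem_filter.1 hk).2).trans_le (hle k)
  by_contra! hF
  rcases F.eq_empty_or_nonempty with hF0 | ⟨m, hm⟩
  · rw [hF0, sdiff_empty, sum_empty] at hsum
    have : (s + 1 : ℝ) ≤ #P := by exact_mod_cast hP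
    nlinarith
  · have hvm : 0 < |v m| := (mem_filter.1 hm).2.1
    have hFm : |v m| ≤ ∑ k ∈ F, |v k| :=
      single_le_sum (f := fun k => |v k|) (fun _ _ => abs_nonneg _) hm
    have : (s : ℝ) ≤ #(P \ F) := by
      rw [card_sdiff_of_subset hFP]; exact_mod_cast (by omega : s ≤ #P - #F)
    nlinarith

/-- Moves mass `min |v i| (α - |v j|)` from entry `i` to entry `j`, keeping signs. For fractional
`i ≠ j` this keeps `‖v‖₁` and `‖v‖_∞ ≤ α` and either empties entry `i` or saturates entry `j`, while
`v` lies on the segment between the moves `i → j` and `j → i`. -/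
noncomputable def transferStep (α : ℝ) (v : ι → ℝ) (i j : ι) : ι → ℝ :=
  v + min |v i| (α - |v j|) • (Pi.single j (Real.sign (v j)) - Pi.single i (Real.sign (v i)))

variable (hi : i ∈ fractionalEntries α v) (hj : j ∈ fractionalEntries α v)
include hi hj

lemma abs_transferStep_apply (hij : i ≠ j) (k : ι) :
    |transferStep α v i j k| = |v k| + (if k = j then min |v i| (α - |v j|) else 0)
      - (if k = i then min |v i| (α - |v j|) else 0) := by
  have hc0 := (min_pos_of_mem_fractionalEntries hi hj).le
  have hci : min |v i| (α - |v j|) ≤ |v i| := min_le_left _ _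
  have hvi : v i ≠ 0 := abs_pos.1 (mem_filter.1 hi).2.1
  have hvj : v j ≠ 0 := abs_pos.1 (mem_filter.1 hj).2.1
  by_cases hki : k = i
  · subst hki
    simpa [transferStep, hij, sub_eq_add_neg] using abs_add_mul_sign hvi (neg_le_neg hci)
  by_cases hkj : k = j
  · subst hkj
    simpa [transferStep, hki] using
      abs_add_mul_sign hvj ((neg_nonpos.2 (abs_nonneg _)).trans hc0)
  · simp [transferStep, hki, hkj]

lemma abs_transferStep_le (hij : i ≠ j) (hle : ∀ k, |v k| ≤ α) (k : ι) :
    |transferStep α v i j k| ≤ α := by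
  have hc0 := min_pos_of_mem_fractionalEntries hi hj
  have hc := min_le_right |v i| (α - |v j|)
  rw [abs_transferStep_apply hi hj hij]
  split_ifs with hkj hki hki
  · exact absurd (hki.symm.trans hkj) hij
  · subst hkj; linarith
  · subst hki; linarith [hle k]
  · linarith [hle k]

lemma l1norm_transferStep (hij : i ≠ j) : l1norm (transferStep α v i j) = l1norm v := by
  simp only [l1norm, abs_transferStep_apply hi hj hij, sum_sub_distrib, sum_add_distrib,
    sum_ite_eq', mem_univ, if_true]
  ring

lemma support_transferStep_subset (hij : i ≠ j) :
    Function.support (transferStep α v i j) ⊆ Function.support v := by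
  refine Function.support_subset_iff'.2 fun k hk => ?_
  rw [Function.notMem_support] at hk
  have hki : k ≠ i := by rintro rfl; simp [fractionalEntries, hk] at hi
  have hkj : k ≠ j := by rintro rfl; simp [fractionalEntries, hk] at hj
  simpa [hki, hkj, hk] using abs_transferStep_apply hi hj hij k

lemma fractionalEntries_transferStep_ssubset (hij : i ≠ j) :
    fractionalEntries α (transferStep α v i j) ⊂ fractionalEntries α v := by
  have habs := abs_transferStep_apply hi hj hij
  rw [ssubset_iff_of_subset]
  · rcases min_choice |v i| (α - |v j|) with hc | hc
    · exact ⟨i, hi, by simp [fractionalEntries, habs, hc, hij]⟩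
    · exact ⟨j, hj, by simp [fractionalEntries, habs, hc, hij.symm]⟩
  · intro k hk
    by_cases hki : k = i
    · exact hki ▸ hi
    by_cases hkj : k = j
    · exact hkj ▸ hj
    simpa [fractionalEntries, habs, hki, hkj] using hk

lemma mem_segment_transferStep :
    v ∈ segment ℝ (transferStep α v i j) (transferStep α v j i) := by
  have := mem_segment_add_smul_add_smul_neg (min_pos_of_mem_fractionalEntries hi hj).le
    (min_pos_of_mem_fractionalEntries hj hi).le v
    (Pi.single j (Real.sign (v j)) - Pi.single i (Real.sign (v i)))
  rwa [neg_sub] at this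

end SparsePolytope

theorem mem_convexHull_sparse {ι : Type*} [Fintype ι] [DecidableEq ι] {α : ℝ} {s : ℕ}
    {v : ι → ℝ} (hle : ∀ k, |v k| ≤ α) (hl1 : l1norm v ≤ s * α) :
    v ∈ convexHull ℝ {u | Sparse s u ∧ (∀ k, |u k| ≤ α) ∧ u.support ⊆ v.support} := by
  induction hn : #(fractionalEntries α v) using Nat.strong_induction_on generalizing v with
  | _ n ih =>
  by_cases hv : Sparse s v
  · exact subset_convexHull ℝ _ ⟨hv, hle, subset_rfl⟩
  have step : ∀ {i j}, i ∈ fractionalEntries α v → j ∈ fractionalEntries α v → i ≠ j →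
      transferStep α v i j ∈
        convexHull ℝ {u | Sparse s u ∧ (∀ k, |u k| ≤ α) ∧ u.support ⊆ v.support} := by
    intro i j hi hj hij
    have hlt := hn ▸ card_lt_card (fractionalEntries_transferStep_ssubset hi hj hij)
    refine convexHull_mono ?_ (ih _ hlt (abs_transferStep_le hi hj hij hle)
      (by rwa [l1norm_transferStep hi hj hij]) rfl)
    exact fun _ hu => ⟨hu.1, hu.2.1, hu.2.2.trans (support_transferStep_subset hi hj hij)⟩
  obtain ⟨i, hi, j, hj, hij⟩ := one_lt_card.1 (one_lt_card_fractionalEntries hle hl1 hv)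
  exact (convex_convexHull ℝ _).segment_subset (step hi hj hij) (step hj hi hij.symm)
    (mem_segment_transferStep hi hj)

lemma HasRIP.neg_dotProduct_mulVec_le_of_abs_le {ι κ : Type*} [Fintype ι] [DecidableEq ι]
    [Fintype κ] {D : Matrix κ ι ℝ} {s t : ℕ} {ρ α : ℝ} (hD : HasRIP D (s + t) ρ)
    (hρ : 0 ≤ ρ)
    {x v : ι → ℝ} (hx : Sparse s x) (hxv : ∀ i, x i * v i = 0) (hle : ∀ i, |v i| ≤ α)
    (hl1 : l1norm v ≤ t * α) :
    -(D *ᵥ x ⬝ᵥ D *ᵥ v) ≤ ρ / 2 * (l2norm x ^ 2 + t * α ^ 2) := by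
  have hlin : ConvexOn ℝ Set.univ fun u => -(D *ᵥ x ⬝ᵥ D *ᵥ u) :=
    ⟨convex_univ, fun _ _ _ _ _ _ _ _ _ => by
      simp only [mulVec_add, mulVec_smul, dotProduct_add, dotProduct_smul, smul_eq_mul]; linarith⟩
  obtain ⟨u, ⟨hu, hule, husupp⟩, hvu⟩ :=
    hlin.exists_ge_of_mem_convexHull (Set.subset_univ _) (mem_convexHull_sparse hle hl1)
  have hxu : ∀ i, x i * u i = 0 := fun i => by
    by_cases hvi : v i = 0
    · rw [Function.notMem_support.1 fun hui => (husupp hui) hvi, mul_zero]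
    · rw [(mul_eq_zero.1 (hxv i)).resolve_right hvi, zero_mul]
  calc -(D *ᵥ x ⬝ᵥ D *ᵥ v) ≤ -(D *ᵥ x ⬝ᵥ D *ᵥ u) := hvu
    _ ≤ ρ / 2 * (l2norm x ^ 2 + l2norm u ^ 2) := hD.neg_dotProduct_mulVec_le hx hu hxu
    _ ≤ ρ / 2 * (l2norm x ^ 2 + t * α ^ 2) := by gcongr; exact hu.l2norm_sq_le hule

theorem HasRIP.quadratic_bound {ι κ : Type*} [Fintype ι] [DecidableEq ι] [Fintype κ]
    {D : Matrix κ ι ℝ} {s : ℕ} {ρ α e ε : ℝ} (hD : HasRIP D (2 * s) ρ) (hρ : 0 ≤ ρ)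
    {x v : ι → ℝ} (hx : Sparse s x) (hxv : ∀ i, x i * v i = 0) (hle : ∀ i, |v i| ≤ α)
    (hl1 : l1norm v ≤ s * α) (hα : s * α ^ 2 ≤ (l2norm x + e) ^ 2)
    (hε : l2norm (D *ᵥ (x + v)) ≤ ε) :
    (1 - 2 * ρ) * l2norm x ^ 2 ≤ (√(1 + ρ) * ε + ρ * e) * l2norm x + ρ / 2 * e ^ 2 := by
  have hx₂ : Sparse (2 * s) x := hx.mono (by omega)
  have hsplit :
      l2norm (D *ᵥ x) ^ 2 = D *ᵥ x ⬝ᵥ D *ᵥ (x + v) - D *ᵥ x ⬝ᵥ D *ᵥ v := by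
    rw [l2norm_sq_eq_dotProduct, mulVec_add, dotProduct_add]; ring
  have hcross : D *ᵥ x ⬝ᵥ D *ᵥ (x + v) ≤ √(1 + ρ) * l2norm x * ε :=
    (dotProduct_le_l2norm_mul _ _).trans
      (mul_le_mul (hD.l2norm_mulVec_le hx₂) hε (l2norm_nonneg _)
        (mul_nonneg (Real.sqrt_nonneg _) (l2norm_nonneg _)))
  have htail := (two_mul s ▸ hD).neg_dotProduct_mulVec_le_of_abs_le hρ hx hxv hle hl1
  have hlower := (hD x hx₂).1
  nlinarith [mul_le_mul_of_nonneg_left hα (by positivity : 0 ≤ ρ / 2)]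

section Cone
variable {ι : Type*} [Fintype ι] [DecidableEq ι] {s : ℕ} {r : ℝ} {h : ι → ℝ}
  {S : Finset ι}

lemma indicator_add_indicator_compl (S : Finset ι) (h : ι → ℝ) :
    (S : Set ι).indicator h + ((Sᶜ : Finset ι) : Set ι).indicator h = h := by
  rw [coe_compl]; exact Set.indicator_self_add_compl _ _

lemma indicator_mul_indicator_compl (S : Finset ι) (h : ι → ℝ) (i : ι) :
    (S : Set ι).indicator h i * ((Sᶜ : Finset ι) : Set ι).indicator h i = 0 := by
  by_cases hi : i ∈ S <;> simp [hi]

lemma abs_indicator_compl_le (hS : IsLargestAbsSet s h S) (hs : 0 < s) (hr : 0 ≤ r) (k : ι) :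
    |((Sᶜ : Finset ι) : Set ι).indicator h k|
      ≤ (l2norm ((S : Set ι).indicator h) + r / √s) / √s := by
  have hsqrt : 0 < √(s : ℝ) := by positivity
  have he : 0 ≤ r / √s := by positivity
  rw [le_div_iff₀ hsqrt]
  by_cases hk : k ∈ S
  · simp only [coe_compl, Set.indicator_of_notMem (Set.notMem_compl_iff.2 hk), abs_zero, zero_mul]
    exact add_nonneg (l2norm_nonneg _) he
  · rw [Set.indicator_of_mem (by simpa using hk)]
    have hsum : √s * (√s * |h k|) ≤ √s * l2norm ((S : Set ι).indicator h) := by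
      rw [← mul_assoc, Real.mul_self_sqrt (Nat.cast_nonneg _)]
      exact (hS.mul_abs_le_sum hk).trans (sum_abs_le_sqrt_mul_l2norm_indicator hS.1 h)
    linarith [le_of_mul_le_mul_left hsum hsqrt]

lemma l1norm_indicator_compl_le (hS : IsLargestAbsSet s h S) (hs : 0 < s)
    (hcone : ∑ i ∈ Sᶜ, |h i| ≤ ∑ i ∈ S, |h i| + r) :
    l1norm (((Sᶜ : Finset ι) : Set ι).indicator h)
      ≤ √s * (l2norm ((S : Set ι).indicator h) + r / √s) := by
  rw [l1norm_indicator, mul_add, mul_div_cancel₀ _ (by positivity)]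
  linarith [sum_abs_le_sqrt_mul_l2norm_indicator hS.1 h]

lemma l2norm_le_of_cone (hS : IsLargestAbsSet s h S) (hs : 0 < s) (hr : 0 ≤ r)
    (hcone : ∑ i ∈ Sᶜ, |h i| ≤ ∑ i ∈ S, |h i| + r) :
    l2norm h ≤ 2 * l2norm ((S : Set ι).indicator h) + r / √s := by
  set t := l2norm ((S : Set ι).indicator h)
  have htail : l2norm (((Sᶜ : Finset ι) : Set ι).indicator h) ≤ t + r / √s := by
    have hte : 0 ≤ t + r / √s := add_nonneg (l2norm_nonneg _) (by positivity)
    rw [← pow_le_pow_iff_left₀ (l2norm_nonneg _) hte two_ne_zero]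
    calc _ ≤ (t + r / √s) / √s * (√s * (t + r / √s)) :=
          (l2norm_sq_le_mul_l1norm (abs_indicator_compl_le hS hs hr)).trans
            (mul_le_mul_of_nonneg_left (l1norm_indicator_compl_le hS hs hcone) (by positivity))
      _ = (t + r / √s) ^ 2 := by field_simp
  have := l2norm_add_le ((S : Set ι).indicator h) (((Sᶜ : Finset ι) : Set ι).indicator h)
  rw [indicator_add_indicator_compl] at this
  linarith

lemma l1norm_le_of_cone (hS : IsLargestAbsSet s h S)
    (hcone : ∑ i ∈ Sᶜ, |h i| ≤ ∑ i ∈ S, |h i| + r) :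
    l1norm h ≤ 2 * √s * l2norm ((S : Set ι).indicator h) + r := by
  have := sum_add_sum_compl S fun i => |h i|
  rw [l1norm, ← this]
  linarith [sum_abs_le_sqrt_mul_l2norm_indicator hS.1 h]

-- Solving the quadratic inequality of `HasRIP.quadratic_bound` for `‖h_S‖₂` gives these constants.
noncomputable def ripNoiseConst (ρ : ℝ) : ℝ := √(1 + ρ) / (1 - 2 * ρ)

noncomputable def ripTailConst (ρ : ℝ) : ℝ := ρ / (1 - 2 * ρ) + √(ρ / (2 * (1 - 2 * ρ)))

theorem HasRIP.l2norm_indicator_le_of_cone {κ : Type*} [Fintype κ] {D : Matrix κ ι ℝ}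
    {ρ ε : ℝ} (hD : HasRIP D (2 * s) ρ) (hρ₀ : 0 ≤ ρ) (hρ : ρ < 1 / 2) (hs : 0 < s)
    (hS : IsLargestAbsSet s h S) (hr : 0 ≤ r) (hDh : l2norm (D *ᵥ h) ≤ ε)
    (hcone : ∑ i ∈ Sᶜ, |h i| ≤ ∑ i ∈ S, |h i| + r) :
    l2norm ((S : Set ι).indicator h) ≤ ripNoiseConst ρ * ε + ripTailConst ρ * (r / √s) := by
  set t := l2norm ((S : Set ι).indicator h)
  set e := r / √s
  have he : 0 ≤ e := by positivity
  have hε : 0 ≤ ε := (l2norm_nonneg _).trans hDh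
  have hk : 0 < 1 - 2 * ρ := by linarith
  have hq := hD.quadratic_bound hρ₀ (α := (t + e) / √s) (e := e) (ε := ε)
    ⟨S, hS.1, fun i hi => by simp [hi]⟩
    (indicator_mul_indicator_compl S h) (abs_indicator_compl_le hS hs hr)
    ((l1norm_indicator_compl_le hS hs hcone).trans_eq
      (by rw [mul_div_left_comm, Real.div_sqrt, mul_comm]))
    (le_of_eq (by
      rw [div_pow, Real.sq_sqrt (Nat.cast_nonneg _), mul_div_cancel₀ _ (by positivity)]))
    (by rwa [indicator_add_indicator_compl])
  have hroot := le_div_add_sqrt_of_mul_sq_le hk (by positivity) (by positivity) hq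
  have hsqrt_eq : √(ρ / 2 * e ^ 2 / (1 - 2 * ρ)) = √(ρ / (2 * (1 - 2 * ρ))) * e := by
    rw [show ρ / 2 * e ^ 2 / (1 - 2 * ρ) = ρ / (2 * (1 - 2 * ρ)) * e ^ 2 by field_simp,
      Real.sqrt_mul' _ (sq_nonneg e), Real.sqrt_sq he]
  rw [hsqrt_eq] at hroot
  calc t ≤ _ := hroot
    _ = ripNoiseConst ρ * ε + ripTailConst ρ * e := by
      simp only [ripNoiseConst, ripTailConst]; ring

end Cone

/-- Theorem 4.5 (Rauhut–Ward): stable and robust recovery via Basis Pursuit Denoising under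
the restricted isometry condition `ρ_{2s}(D) ≤ ρ < 3/(4+√6)`. -/
theorem bpdn_recovery_under_rip :
    ∀ ρ : ℝ, 0 ≤ ρ → ρ < 3 / (4 + Real.sqrt 6) →
    ∃ c₁ c₂ c₃ c₄ : ℝ, 0 < c₁ ∧ 0 < c₂ ∧ 0 < c₃ ∧ 0 < c₄ ∧
      ∀ (N n s : ℕ), 1 ≤ N → 1 ≤ n → 1 ≤ s →
      ∀ D : Matrix (Fin N) (Fin n) ℝ,
      (∀ c : Fin n → ℝ, Sparse (2 * s) c →
        (1 - ρ) * (l2norm c) ^ 2 ≤ (l2norm (D.mulVec c)) ^ 2 ∧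
          (l2norm (D.mulVec c)) ^ 2 ≤ (1 + ρ) * (l2norm c) ^ 2) →
      ∀ (ctil : Fin n → ℝ) (y : Fin N → ℝ) (η : ℝ), 0 ≤ η →
        l2norm (D.mulVec ctil - y) ≤ η →
      ∀ chat : Fin n → ℝ, IsBPDNSolution D y η chat →
        l2norm (ctil - chat) ≤ c₁ / Real.sqrt (s : ℝ) * bestSTermError s ctil + c₂ * η ∧
        l1norm (ctil - chat) ≤ c₃ * bestSTermError s ctil + c₄ * η * Real.sqrt (s : ℝ) := by
  intro ρ hρ₀ hρ
  have hρ' : ρ < 1 / 2 := by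
    have h6 : 2 ≤ √6 := Real.le_sqrt_of_sq_le (by norm_num)
    rw [lt_div_iff₀ (by positivity)] at hρ
    nlinarith [mul_le_mul_of_nonneg_left h6 hρ₀]
  have hA : 0 < ripNoiseConst ρ := div_pos (by positivity) (by linarith)
  have hB : 0 ≤ ripTailConst ρ :=
    add_nonneg (div_nonneg hρ₀ (by linarith)) (Real.sqrt_nonneg _)
  refine ⟨2 * (2 * ripTailConst ρ + 1), 4 * ripNoiseConst ρ, 2 * (2 * ripTailConst ρ + 1),
    4 * ripNoiseConst ρ, by positivity, by positivity, by positivity, by positivity, ?_⟩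
  intro N n s _ _ hs D hD ctil y η _ hfeas chat hchat
  replace hD : HasRIP D (2 * s) ρ := hD
  obtain ⟨S, hS⟩ := exists_isLargestAbsSet s (ctil - chat)
  have hσ : 0 ≤ 2 * bestSTermError s ctil := by have := bestSTermError_nonneg s ctil; positivity
  have hcone := hchat.sum_compl_abs_sub_le hfeas hS
  have hhead := hD.l2norm_indicator_le_of_cone hρ₀ hρ' hs hS hσ
    (hchat.l2norm_mulVec_sub_le hfeas) hcone
  have h₂ := l2norm_le_of_cone hS hs hσ hcone
  have h₁ := l1norm_le_of_cone hS hcone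
  constructor
  · calc l2norm (ctil - chat)
        ≤ 2 * (ripNoiseConst ρ * (2 * η) + ripTailConst ρ * (2 * bestSTermError s ctil / √s))
          + 2 * bestSTermError s ctil / √s := h₂.trans (by gcongr)
      _ = _ := by ring
  · calc l1norm (ctil - chat)
        ≤ 2 * √s * (ripNoiseConst ρ * (2 * η)
            + ripTailConst ρ * (2 * bestSTermError s ctil / √s)) + 2 * bestSTermError s ctil :=
          h₁.trans (by gcongr)
      _ = _ := by field_simp; ring
end

section
/- Let d ≥ 1 and l ≥ 0 be integers and let M ≥ 0 be a real number. Then the number of multi-indices i = (i₁,…,i_d) ∈ ℕᵈ such that exactly l of the entries i_k are nonzero and ∑_{k=1}^d k²·i_k ≤ M is at most (M·π²/6)^l / l!. -/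
open scoped Classical

/-- The weighted total order `S(i) = ∑_{k=1}^d k²·i_k` of a multi-index `i ∈ ℕᵈ`
(with `k` ranging over `1,…,d`). -/
def weightedOrder {d : ℕ} (i : Fin d → ℕ) : ℕ := ∑ k : Fin d, ((k : ℕ) + 1) ^ 2 * i k

/-!
Every counted multi-index satisfies `i_k ≤ m_k := ⌊M / k²⌋`, so it is determined by its support
`T`, a set of size `l`, together with a point of the box `∏_{k ∈ T} [1, m_k]`. The count is
therefore at most the elementary symmetric polynomial `e_l(m)`. Adding the `m_k` one at a time,
`e_{l+1}(x, m) = e_{l+1}(m) + x · e_l(m)` and Bernoulli's inequality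
`A^(l+1) + (l+1) A^l x ≤ (A + x)^(l+1)` give `l! · e_l(m) ≤ (∑ m_k)^l` by induction.
Finally `∑ m_k ≤ M ∑ 1/k² ≤ M π²/6`.
-/

namespace Multiset

variable {R : Type*} [CommSemiring R]

theorem esymm_cons_succ (x : R) (s : Multiset R) (n : ℕ) :
    (x ::ₘ s).esymm (n + 1) = s.esymm (n + 1) + x * s.esymm n := by
  simp [esymm, map_map, prod_cons, sum_map_mul_left]

theorem factorial_mul_esymm_le_sum_pow [LinearOrder R] [IsOrderedRing R] [ExistsAddOfLE R]
    {s : Multiset R} (hs : ∀ x ∈ s, 0 ≤ x) (n : ℕ) : n.factorial * s.esymm n ≤ s.sum ^ n := by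
  induction s using Multiset.induction_on generalizing n with
  | empty => cases n <;> simp [esymm, powersetCard_zero_right]
  | cons x s ih =>
    have hx : 0 ≤ x := hs x (mem_cons_self x s)
    have hs' : ∀ y ∈ s, 0 ≤ y := fun y hy => hs y (mem_cons_of_mem hy)
    have hsum : 0 ≤ s.sum := sum_nonneg hs'
    cases n with
    | zero => simp [esymm]
    | succ n =>
      calc ((n + 1).factorial : R) * (x ::ₘ s).esymm (n + 1)
          = (n + 1).factorial * s.esymm (n + 1) + (n + 1) * (n.factorial * s.esymm n) * x := by
            rw [esymm_cons_succ, Nat.factorial_succ]; push_cast; ring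
        _ ≤ s.sum ^ (n + 1) + (n + 1) * s.sum ^ n * x := by
            gcongr
            exacts [ih hs' (n + 1), add_nonneg n.cast_nonneg zero_le_one, ih hs' n]
        _ ≤ (s.sum + x) ^ (n + 1) := by
            simpa using
              pow_add_mul_le_add_pow hsum (add_nonneg (mul_nonneg zero_le_two hsum) hx) (n + 1)
        _ = (x ::ₘ s).sum ^ (n + 1) := by rw [sum_cons, add_comm]

end Multiset

open Finset

section

variable {ι : Type*} [Fintype ι] [DecidableEq ι]

theorem card_filter_Iic_support_eq (m : ι → ℕ) (T : Finset ι) :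
    #{i ∈ Iic m | univ.filter (i · ≠ 0) = T} = ∏ k ∈ T, m k := by
  have hbox : {i ∈ Iic m | univ.filter (i · ≠ 0) = T} =
      Fintype.piFinset fun k => if k ∈ T then Icc 1 (m k) else {0} := by
    ext i
    simp only [mem_filter, mem_Iic, Fintype.mem_piFinset, Finset.ext_iff, mem_univ, true_and,
      Pi.le_def, ← forall_and]
    refine forall_congr' fun k => ?_
    by_cases hk : k ∈ T <;> simp [hk] <;> omega
  simp only [hbox, Fintype.card_piFinset, apply_ite card, Nat.card_Icc, add_tsub_cancel_right,
    card_singleton, prod_ite_mem, univ_inter]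

theorem card_filter_Iic_card_support_eq (m : ι → ℕ) (l : ℕ) :
    #{i ∈ Iic m | #(univ.filter (i · ≠ 0)) = l} = (univ.val.map m).esymm l := by
  rw [esymm_map_val, card_eq_sum_card_fiberwise (f := fun i => univ.filter (i · ≠ 0))
    (t := univ.powersetCard l) fun i hi => by simp_all]
  refine sum_congr rfl fun T hT => ?_
  have hTl : #T = l := (mem_powersetCard.1 hT).2
  rw [← card_filter_Iic_support_eq, filter_filter]
  exact congrArg card (filter_congr fun i _ => ⟨And.right, fun h => ⟨h ▸ hTl, h⟩⟩)

end

theorem sum_range_one_div_succ_sq_le (n : ℕ) :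
    ∑ k ∈ range n, 1 / ((k : ℝ) + 1) ^ 2 ≤ Real.pi ^ 2 / 6 := by
  -- the `k = 0` term of the Basel series is the junk value `1 / 0 = 0`
  have h := sum_le_hasSum (range (n + 1)) (fun k _ => by positivity) hasSum_zeta_two
  simpa [sum_range_succ'] using h

theorem le_floor_div_sq_of_weightedOrder_le {d : ℕ} {i : Fin d → ℕ} {M : ℝ}
    (hi : (weightedOrder i : ℝ) ≤ M) (k : Fin d) : i k ≤ ⌊M / ((k : ℕ) + 1 : ℝ) ^ 2⌋₊ := by
  have hk : ((k : ℕ) + 1) ^ 2 * i k ≤ weightedOrder i :=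
    single_le_sum (f := fun j : Fin d => ((j : ℕ) + 1) ^ 2 * i j) (fun _ _ => Nat.zero_le _)
      (mem_univ k)
  refine Nat.le_floor ((le_div_iff₀ (by positivity)).2 ?_)
  rw [mul_comm]
  exact le_trans (by exact_mod_cast hk) hi

theorem sum_floor_div_sq_le {M : ℝ} (hM : 0 ≤ M) (d : ℕ) :
    ∑ k : Fin d, (⌊M / ((k : ℕ) + 1 : ℝ) ^ 2⌋₊ : ℝ) ≤ M * Real.pi ^ 2 / 6 :=
  calc ∑ k : Fin d, (⌊M / ((k : ℕ) + 1 : ℝ) ^ 2⌋₊ : ℝ)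
      ≤ ∑ k : Fin d, M * (1 / ((k : ℕ) + 1 : ℝ) ^ 2) :=
        sum_le_sum fun k _ => (Nat.floor_le (by positivity)).trans (by rw [mul_one_div])
    _ = M * ∑ k ∈ range d, 1 / ((k : ℝ) + 1) ^ 2 := by
        rw [← mul_sum, Fin.sum_univ_eq_sum_range (fun k => 1 / ((k : ℝ) + 1) ^ 2)]
    _ ≤ M * Real.pi ^ 2 / 6 := by
        rw [mul_div_assoc]
        exact mul_le_mul_of_nonneg_left (sum_range_one_div_succ_sq_le d) hM

theorem count_multiindices_with_support_size_general
    (d l : ℕ) (M : ℝ) (hM : 0 ≤ M) :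
    (Nat.card {i : Fin d → ℕ |
        (Finset.univ.filter fun k => i k ≠ 0).card = l ∧ (weightedOrder i : ℝ) ≤ M} : ℝ) ≤
      (M * Real.pi ^ 2 / 6) ^ l / (Nat.factorial l : ℝ) := by
  set m : Fin d → ℕ := fun k => ⌊M / ((k : ℕ) + 1 : ℝ) ^ 2⌋₊
  have hsub : {i : Fin d → ℕ | #(univ.filter fun k => i k ≠ 0) = l ∧ (weightedOrder i : ℝ) ≤ M} ⊆
      ↑{i ∈ Iic m | #(univ.filter (i · ≠ 0)) = l} := fun i hi =>
    mem_filter.2 ⟨mem_Iic.2 (le_floor_div_sq_of_weightedOrder_le hi.2), hi.1⟩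
  have hesymm := Multiset.factorial_mul_esymm_le_sum_pow (s := univ.val.map m) (by simp) l
  calc _ ≤ (#{i ∈ Iic m | #(univ.filter (i · ≠ 0)) = l} : ℝ) := by
        rw [Nat.card_coe_set_eq, ← Set.ncard_coe_finset]
        exact_mod_cast Set.ncard_le_ncard hsub (finite_toSet _)
    _ ≤ (∑ k, (m k : ℝ)) ^ l / l.factorial := by
        rw [card_filter_Iic_card_support_eq, le_div_iff₀ (by positivity), mul_comm]
        exact_mod_cast hesymm
    _ ≤ (M * Real.pi ^ 2 / 6) ^ l / l.factorial := by
        gcongr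
        exact sum_floor_div_sq_le hM d

/-- The number of multi-indices `i ∈ ℕᵈ` with exactly `l` nonzero entries and
`∑ k²·i_k ≤ M` is at most `(Mπ²/6)^l / l!`. -/
theorem count_multiindices_with_support_size
    (d l : ℕ) (hd : 1 ≤ d) (M : ℝ) (hM : 0 ≤ M) :
    (Nat.card {i : Fin d → ℕ |
        (Finset.univ.filter fun k => i k ≠ 0).card = l ∧ (weightedOrder i : ℝ) ≤ M} : ℝ) ≤
      (M * Real.pi ^ 2 / 6) ^ l / (Nat.factorial l : ℝ) :=
  count_multiindices_with_support_size_general d l M hM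
end

section
/- Let d ≥ 1 be an integer and let M ≥ 0 be a real number. Then the number of multi-indices i = (i₁,…,i_d) ∈ ℕᵈ with ∑_{k=1}^d k²·i_k ≤ M is at most exp(M·π²/6). In particular this bound does not depend on the dimension d. -/
/-! An admissible index lies in the box `0 ≤ i_k ≤ ⌊M/k²⌋`, which has `∏ (⌊M/k²⌋ + 1)` points.
Bounding each factor by `exp (M/k²)` turns the product into `exp (M ∑ 1/k²) ≤ exp (M π²/6)`,
uniformly in `d` because `∑ 1/k² = ζ(2)` converges. -/

open Real Finset

theorem natFloor_add_one_le_exp {x : ℝ} (hx : 0 ≤ x) : (⌊x⌋₊ : ℝ) + 1 ≤ exp x := by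
  linarith [Nat.floor_le hx, add_one_le_exp x]

theorem sum_range_inv_succ_sq_le_pi_sq_div_six (d : ℕ) :
    ∑ n ∈ range d, ((n : ℝ) + 1)⁻¹ ^ 2 ≤ π ^ 2 / 6 := by
  have h := sum_le_hasSum (range (d + 1)) (fun n _ => by positivity) hasSum_zeta_two
  simpa [sum_range_succ'] using h

section WeightedSimplex

variable {ι : Type*} [Fintype ι] (w : ι → ℕ)

theorem coord_le_floor_of_weightedSum_le (hw : ∀ k, 0 < w k) {M : ℝ} {i : ι → ℕ}
    (hi : ((∑ k, w k * i k : ℕ) : ℝ) ≤ M) (k : ι) : i k ≤ ⌊M / w k⌋₊ := by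
  have hterm : w k * i k ≤ ∑ k, w k * i k :=
    single_le_sum (f := fun j => w j * i j) (fun _ _ => Nat.zero_le _) (mem_univ k)
  apply Nat.le_floor
  rw [le_div_iff₀ (by exact_mod_cast hw k), mul_comm]
  exact le_trans (by exact_mod_cast hterm) hi

theorem card_weightedSum_le_le_prod (hw : ∀ k, 0 < w k) (M : ℝ) :
    Nat.card {i : ι → ℕ | ((∑ k, w k * i k : ℕ) : ℝ) ≤ M} ≤ ∏ k, (⌊M / w k⌋₊ + 1) := by
  classical
  have hsub : {i : ι → ℕ | ((∑ k, w k * i k : ℕ) : ℝ) ≤ M} ⊆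
      Fintype.piFinset fun k => range (⌊M / w k⌋₊ + 1) := fun i hi => by
    simpa [Nat.lt_succ_iff] using coord_le_floor_of_weightedSum_le w hw hi
  calc _ ≤ Nat.card (Fintype.piFinset fun k => range (⌊M / w k⌋₊ + 1) : Set (ι → ℕ)) :=
        Nat.card_mono (Finset.finite_toSet _) hsub
    _ = ∏ k, (⌊M / w k⌋₊ + 1) := by
      rw [Nat.card_coe_set_eq, Set.ncard_coe_finset, Fintype.card_piFinset]
      simp

theorem card_weightedSum_le_le_exp (hw : ∀ k, 0 < w k) {M : ℝ} (hM : 0 ≤ M) :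
    (Nat.card {i : ι → ℕ | ((∑ k, w k * i k : ℕ) : ℝ) ≤ M} : ℝ) ≤
      exp (M * ∑ k, (w k : ℝ)⁻¹) := by
  calc (Nat.card {i : ι → ℕ | ((∑ k, w k * i k : ℕ) : ℝ) ≤ M} : ℝ)
      ≤ ∏ k, ((⌊M / w k⌋₊ : ℝ) + 1) := by exact_mod_cast card_weightedSum_le_le_prod w hw M
    _ ≤ ∏ k, exp (M / w k) :=
        prod_le_prod (fun _ _ => by positivity) fun k _ => natFloor_add_one_le_exp (by positivity)
    _ = exp (M * ∑ k, (w k : ℝ)⁻¹) := by simp [← exp_sum, mul_sum, div_eq_mul_inv]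

end WeightedSimplex

theorem count_anisotropic_basis_dimension_free_general
    (d : ℕ) (M : ℝ) (hM : 0 ≤ M) :
    (Nat.card {i : Fin d → ℕ | (weightedOrder i : ℝ) ≤ M} : ℝ) ≤
      Real.exp (M * Real.pi ^ 2 / 6) := by
  have hcount := card_weightedSum_le_le_exp (fun k : Fin d => ((k : ℕ) + 1) ^ 2)
    (fun _ => by positivity) hM
  have hzeta : ∑ k : Fin d, ((((k : ℕ) + 1) ^ 2 : ℕ) : ℝ)⁻¹ ≤ π ^ 2 / 6 := by
    rw [Fin.sum_univ_eq_sum_range (fun n => ((((n : ℕ) + 1) ^ 2 : ℕ) : ℝ)⁻¹) d]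
    simpa [inv_pow] using sum_range_inv_succ_sq_le_pi_sq_div_six d
  calc _ ≤ exp (M * ∑ k : Fin d, ((((k : ℕ) + 1) ^ 2 : ℕ) : ℝ)⁻¹) := hcount
    _ ≤ exp (M * π ^ 2 / 6) := by
      rw [mul_div_assoc]
      exact exp_le_exp.mpr (mul_le_mul_of_nonneg_left hzeta hM)

/-- The number of multi-indices `i ∈ ℕᵈ` with `∑ k²·i_k ≤ M` is at most `exp(Mπ²/6)`,
a bound independent of the dimension `d`. -/
theorem count_anisotropic_basis_dimension_free
    (d : ℕ) (hd : 1 ≤ d) (M : ℝ) (hM : 0 ≤ M) :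
    (Nat.card {i : Fin d → ℕ | (weightedOrder i : ℝ) ≤ M} : ℝ) ≤
      Real.exp (M * Real.pi ^ 2 / 6) :=
  count_anisotropic_basis_dimension_free_general d M hM
end

section
/- For all real α > 0 and B > 0 there exists ν > 0, depending only on α and B, such that the following holds: for every integer d ≥ 1, every family of real coefficients c : ℕᵈ → ℝ satisfying |c_i| ≤ B·exp(−α·∑_{k=1}^d k²·i_k) for every multi-index i ∈ ℕᵈ, every ε ∈ (0, 0.9), and every real M ≥ −ν·log ε, the family (c_i²) is summable over {i ∈ ℕᵈ : ∑_{k=1}^d k²·i_k > M} and ∑_{i : ∑_k k² i_k > M} c_i² ≤ ε. -/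
open Real Finset

theorem hasSum_prod_pow_of_lt_one {d : ℕ} {r : Fin d → ℝ} (hr₀ : ∀ k, 0 ≤ r k)
    (hr₁ : ∀ k, r k < 1) : HasSum (fun i : Fin d → ℕ => ∏ k, r k ^ i k) (∏ k, (1 - r k)⁻¹) := by
  induction d with
  | zero => simp
  | succ d ih =>
    have hgeom := hasSum_geometric_of_lt_one (hr₀ 0) (hr₁ 0)
    have htail := ih (fun k => hr₀ k.succ) (fun k => hr₁ k.succ)
    have hsummable := hgeom.summable.mul_of_nonneg htail.summable
      (fun n => pow_nonneg (hr₀ 0) n) (fun i => prod_nonneg fun k _ => pow_nonneg (hr₀ _) _)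
    have hprod := hgeom.mul htail hsummable
    rw [← (Fin.consEquiv fun _ => ℕ).hasSum_iff, Fin.prod_univ_succ]
    refine hprod.congr_fun fun p => ?_
    simp only [Function.comp_apply, Fin.consEquiv, Equiv.coe_fn_mk, Fin.prod_univ_succ,
      Fin.cons_zero, Fin.cons_succ]

theorem inv_one_sub_le_exp_div {x q : ℝ} (hx₀ : 0 ≤ x) (hxq : x ≤ q) (hq : q < 1) :
    (1 - x)⁻¹ ≤ exp (x / (1 - q)) := by
  have hx₁ : 0 < 1 - x := by linarith
  calc (1 - x)⁻¹ = x / (1 - x) + 1 := by field_simp; ring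
    _ ≤ x / (1 - q) + 1 := by gcongr
    _ ≤ exp (x / (1 - q)) := add_one_le_exp _

theorem prod_inv_one_sub_le_exp_sum_div {ι : Type*} (s : Finset ι) {x : ι → ℝ} {q : ℝ}
    (hx₀ : ∀ k ∈ s, 0 ≤ x k) (hxq : ∀ k ∈ s, x k ≤ q) (hq : q < 1) :
    ∏ k ∈ s, (1 - x k)⁻¹ ≤ exp ((∑ k ∈ s, x k) / (1 - q)) := by
  rw [sum_div, exp_sum]
  refine prod_le_prod (fun k hk => ?_) fun k hk => inv_one_sub_le_exp_div (hx₀ k hk) (hxq k hk) hq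
  exact inv_nonneg.2 (by linarith [hxq k hk])

theorem exp_neg_mul_weightedOrder {d : ℕ} (α : ℝ) (i : Fin d → ℕ) :
    exp (-α * weightedOrder i) = ∏ k : Fin d, (exp (-α) ^ ((k + 1) ^ 2 : ℕ)) ^ i k := by
  simp only [weightedOrder, Nat.cast_sum, mul_sum, exp_sum, ← exp_nat_mul]
  congr! 2
  push_cast
  ring

theorem hasSum_exp_neg_mul_weightedOrder {α : ℝ} (hα : 0 < α) (d : ℕ) :
    HasSum (fun i : Fin d → ℕ => exp (-α * weightedOrder i))
      (∏ k : Fin d, (1 - exp (-α) ^ ((k + 1) ^ 2 : ℕ))⁻¹) := by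
  simp only [exp_neg_mul_weightedOrder]
  have hq : exp (-α) < 1 := exp_lt_one_iff.2 (by linarith)
  exact hasSum_prod_pow_of_lt_one (fun _ => by positivity)
    fun k => pow_lt_one₀ (exp_pos _).le hq (by positivity)

theorem prod_inv_one_sub_pow_sq_le {q : ℝ} (hq₀ : 0 ≤ q) (hq₁ : q < 1) (d : ℕ) :
    ∏ k : Fin d, (1 - q ^ ((k + 1) ^ 2 : ℕ))⁻¹ ≤ exp (((1 - q) ^ 2)⁻¹) := by
  have hle : ∀ k : ℕ, q ^ ((k + 1) ^ 2) ≤ q ^ k :=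
    fun k => pow_le_pow_of_le_one hq₀ hq₁.le (by nlinarith)
  have hsum : ∑ k : Fin d, q ^ ((k + 1) ^ 2 : ℕ) ≤ (1 - q)⁻¹ := calc
    _ ≤ ∑ k ∈ range d, q ^ k := by
        rw [← Fin.sum_univ_eq_sum_range]
        exact sum_le_sum fun k _ => hle k
    _ ≤ q ^ 0 / (1 - q) := by
        rw [range_eq_Ico]
        exact geom_sum_Ico_le_of_lt_one hq₀ hq₁
    _ = (1 - q)⁻¹ := by rw [pow_zero, one_div]
  calc _ ≤ exp ((∑ k : Fin d, q ^ ((k + 1) ^ 2 : ℕ)) / (1 - q)) :=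
        prod_inv_one_sub_le_exp_sum_div _ (fun _ _ => by positivity)
          (fun k _ => pow_le_of_le_one hq₀ hq₁.le (by positivity)) hq₁
    _ ≤ exp ((1 - q)⁻¹ / (1 - q)) := by
        have : 0 < 1 - q := by linarith
        gcongr
    _ = exp (((1 - q) ^ 2)⁻¹) := by rw [div_eq_mul_inv, ← mul_inv, ← sq]

theorem sq_le_mul_exp_of_lt {α B M w c : ℝ} (hα : 0 ≤ α) (hc : |c| ≤ B * exp (-α * w))
    (hM : M < w) : c ^ 2 ≤ B ^ 2 * exp (-α * M) * exp (-α * w) := calc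
  c ^ 2 = |c| ^ 2 := (sq_abs c).symm
  _ ≤ (B * exp (-α * w)) ^ 2 := pow_le_pow_left₀ (abs_nonneg c) hc 2
  _ = B ^ 2 * exp (-α * w) * exp (-α * w) := by ring
  _ ≤ B ^ 2 * exp (-α * M) * exp (-α * w) := by
    have : exp (-α * w) ≤ exp (-α * M) := exp_le_exp.2 (by nlinarith)
    gcongr

theorem summable_and_tsum_sq_le_of_abs_le_mul_exp {ι : Type*} {w c : ι → ℝ} {α B M Z : ℝ}
    (hα : 0 ≤ α) (hZ : HasSum (fun i => exp (-α * w i)) Z)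
    (hc : ∀ i, |c i| ≤ B * exp (-α * w i)) :
    Summable (fun i : {i // M < w i} => c i.1 ^ 2) ∧
      ∑' i : {i // M < w i}, c i.1 ^ 2 ≤ B ^ 2 * exp (-α * M) * Z := by
  have hle : ∀ i : {i // M < w i}, c i.1 ^ 2 ≤ B ^ 2 * exp (-α * M) * exp (-α * w i.1) :=
    fun i => sq_le_mul_exp_of_lt hα (hc i.1) i.2
  have hmajorant := (hZ.summable.subtype {i | M < w i}).mul_left (B ^ 2 * exp (-α * M))
  have hsummable := hmajorant.of_nonneg_of_le (fun _ => sq_nonneg _) hle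
  refine ⟨hsummable, ?_⟩
  calc _ ≤ ∑' i : {i // M < w i}, B ^ 2 * exp (-α * M) * exp (-α * w i.1) :=
        hsummable.tsum_le_tsum hle hmajorant
    _ = B ^ 2 * exp (-α * M) * ∑' i : {i // M < w i}, exp (-α * w i.1) := tsum_mul_left
    _ ≤ B ^ 2 * exp (-α * M) * Z := by
        gcongr
        exact hZ.tsum_eq ▸ hZ.summable.tsum_subtype_le _ _ fun _ => (exp_pos _).le

theorem exists_pos_forall_mul_exp_neg_le {K α θ : ℝ} (hK : 0 < K) (hα : 0 < α) (hθ₀ : 0 < θ)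
    (hθ₁ : θ < 1) :
    ∃ ν : ℝ, 0 < ν ∧ ∀ ε, 0 < ε → ε < θ → ∀ M, -ν * log ε ≤ M → K * exp (-α * M) ≤ ε := by
  have hL : 0 < -log θ := neg_pos.2 (log_neg hθ₀ hθ₁)
  set a := max 0 (log K)
  refine ⟨(1 + a / -log θ) / α, by positivity, fun ε hε hεθ M hM => ?_⟩
  have hθε : 1 ≤ -log ε / -log θ := (one_le_div hL).2 (neg_le_neg (log_le_log hε hεθ.le))
  have key : log K - log ε ≤ α * M := calc
    log K - log ε ≤ a * (-log ε / -log θ) - log ε := by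
        gcongr
        exact (le_max_right 0 _).trans (le_mul_of_one_le_right (le_max_left _ _) hθε)
    _ = α * (-((1 + a / -log θ) / α) * log ε) := by field_simp; ring
    _ ≤ α * M := by gcongr
  calc K * exp (-α * M) = exp (log K + -α * M) := by rw [exp_add, exp_log hK]
    _ ≤ exp (log ε) := exp_le_exp.2 (by linarith)
    _ = ε := exp_log hε

/-- Lemma 4.6 (truncation tail bound): for exponentially decaying coefficients
`|c_i| ≤ B·exp(−α·S(i))`, there is `ν > 0` depending only on `α` and `B` such that for every
`ε ∈ (0, 0.9)` and every `M ≥ −ν·log ε`, the tail mean-squared truncation error over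
`{i : S(i) > M}` is summable and at most `ε`, uniformly in the dimension `d`. -/
theorem truncation_tail_bound :
    ∀ α B : ℝ, 0 < α → 0 < B →
    ∃ ν : ℝ, 0 < ν ∧
      ∀ d : ℕ, 1 ≤ d →
      ∀ c : (Fin d → ℕ) → ℝ,
      (∀ i : Fin d → ℕ, |c i| ≤ B * Real.exp (-α * (weightedOrder i : ℝ))) →
      ∀ ε : ℝ, 0 < ε → ε < 0.9 →
      ∀ M : ℝ, -ν * Real.log ε ≤ M →
        Summable (fun i : {i : Fin d → ℕ // M < (weightedOrder i : ℝ)} => (c i.1) ^ 2) ∧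
          ∑' i : {i : Fin d → ℕ // M < (weightedOrder i : ℝ)}, (c i.1) ^ 2 ≤ ε := by
  intro α B hα hB
  have hq₁ : exp (-α) < 1 := exp_lt_one_iff.2 (by linarith)
  set C := exp (((1 - exp (-α)) ^ 2)⁻¹)
  obtain ⟨ν, hν, hdecay⟩ := exists_pos_forall_mul_exp_neg_le (K := B ^ 2 * C) (θ := 0.9)
    (by positivity) hα (by norm_num) (by norm_num)
  refine ⟨ν, hν, fun d _ c hc ε hε hε₁ M hM => ?_⟩
  obtain ⟨hsummable, htail⟩ := summable_and_tsum_sq_le_of_abs_le_mul_exp (M := M) hα.le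
    (hasSum_exp_neg_mul_weightedOrder hα d) hc
  refine ⟨hsummable, htail.trans ?_⟩
  calc _ ≤ B ^ 2 * exp (-α * M) * C := by
        gcongr
        exact prod_inv_one_sub_pow_sq_le (exp_pos _).le hq₁ d
    _ = B ^ 2 * C * exp (-α * M) := by ring
    _ ≤ ε := hdecay ε hε hε₁ M hM
end
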